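/- A continuous bounded function u on an open disk D_r(z₀) ⊆ ℂ that satisfies the mean value property on every closed subdisk, i.e. u(z) = (1/2π)∫₀^{2π} u(z + ρe^{iθ}) dθ whenever the closed disk of radius ρ about z lies in D_r(z₀), is harmonic on D_r(z₀). -/

import Mathlib

open Complex Real MeasureTheory Metric

noncomputable def laplacian (u : ℂ → ℝ) (z : ℂ) : ℝ :=
  fderiv ℝ (fun w => fderiv ℝ u w 1) z 1 + fderiv ℝ (fun w => fderiv ℝ u w Complex.I) z Complex.I

def HarmonicOnSet (u : ℂ → ℝ) (D : Set ℂ) : Prop :=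
  ContDiffOn ℝ 2 u D ∧ ∀ z ∈ D, laplacian u z = 0

noncomputable def poissonKernel' (z ζ : ℂ) : ℝ :=
  (1 - ‖z‖ ^ 2) / ‖z - ζ‖ ^ 2

noncomputable def circInt (g : ℂ → ℝ) : ℝ :=
  ∫ θ in (0:ℝ)..(2 * Real.pi), g (Complex.exp (θ * Complex.I))

/-!
Mollify `u` by a radial bump `φ`. Integrating in polar coordinates, the mean value property on
small circles about `y` gives `(φ ⋆ u) y = (∫ φ) • u y` near every point, so `u` is smooth.
For a `C²` function, averaging the second-order Taylor expansion over the circle of radius `ρ`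
about `w` gives `u w + ρ² Δu(w) / 4 + o(ρ²)`; the mean value property forces `Δu(w) = 0`.
-/

open Set Topology
open scoped Convolution ContDiff

theorem polarCoord_symm_eq_circleMap (p : ℝ × ℝ) :
    Complex.polarCoord.symm p = circleMap 0 p.1 p.2 := by
  rw [Complex.polarCoord_symm_apply, circleMap_zero, Complex.exp_mul_I]
  push_cast
  ring

theorem integral_Ioo_comp_circleMap_zero {E : Type*} [NormedAddCommGroup E] [NormedSpace ℝ E]
    (f : ℂ → E) (ρ : ℝ) :
    ∫ θ in Ioo (-π) π, f (circleMap 0 ρ θ) = (2 * π) • circleAverage f 0 ρ := by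
  rw [circleAverage_eq_integral_add (-π), smul_smul,
    mul_inv_cancel₀ (by positivity), one_smul,
    intervalIntegral.integral_comp_add_right (fun θ => f (circleMap 0 ρ θ)),
    intervalIntegral.integral_of_le (by linarith [pi_pos]), integral_Ioc_eq_integral_Ioo]
  ring_nf

theorem integral_radial_smul_eq_integral_circleAverage {E : Type*} [NormedAddCommGroup E]
    [NormedSpace ℝ E] {ψ : ℝ → ℝ} {f : ℂ → E} {ε : ℝ}
    (hψ : ContinuousOn ψ (Icc 0 ε)) (hψε : ∀ s, ε < s → ψ s = 0)
    (hf : ContinuousOn f (closedBall 0 ε)) :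
    ∫ t, ψ ‖t‖ • f t = (2 * π) • ∫ ρ in Ioc 0 ε, (ρ * ψ ρ) • circleAverage f 0 ρ := by
  set F : ℝ × ℝ → E := fun p => (p.1 * ψ p.1) • f (circleMap 0 p.1 p.2)
  have hF : ∀ p ∈ Ioi 0 ×ˢ Ioo (-π) π, p.1 • (ψ ‖Complex.polarCoord.symm p‖ •
      f (Complex.polarCoord.symm p)) = F p := by
    rintro ⟨ρ, θ⟩ ⟨hρ, -⟩
    simp only [polarCoord_symm_eq_circleMap, norm_circleMap_zero, abs_of_pos (show 0 < ρ from hρ),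
      F, smul_smul]
  have hFzero : ∀ p ∈ Ioi 0 ×ˢ Ioo (-π) π \ Ioc 0 ε ×ˢ Ioo (-π) π, F p = 0 := by
    rintro ⟨ρ, θ⟩ ⟨⟨hρ, hθ⟩, hnot⟩
    have : ε < ρ := by
      by_contra h
      exact hnot ⟨⟨hρ, not_lt.1 h⟩, hθ⟩
    simp [F, hψε ρ this]
  have hFint : IntegrableOn F (Ioc 0 ε ×ˢ Ioo (-π) π) := by
    refine ContinuousOn.integrableOn_compact (isCompact_Icc.prod isCompact_Icc) ?_ |>.mono_set
      (prod_mono Ioc_subset_Icc_self Ioo_subset_Icc_self)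
    have hmaps : MapsTo (fun p : ℝ × ℝ => circleMap 0 p.1 p.2) (Icc 0 ε ×ˢ Icc (-π) π)
        (closedBall 0 ε) := by
      rintro ⟨ρ, θ⟩ ⟨hρ, -⟩
      simpa [abs_of_nonneg hρ.1] using hρ.2
    exact ((continuousOn_fst.mul (hψ.comp continuousOn_fst fun p hp => hp.1)).smul
      (hf.comp (by fun_prop) hmaps))
  rw [← Complex.integral_comp_polarCoord_symm, polarCoord_target,
    setIntegral_congr_fun (measurableSet_Ioi.prod measurableSet_Ioo) hF,
    setIntegral_eq_of_subset_of_forall_sdiff_eq_zero (measurableSet_Ioi.prod measurableSet_Ioo)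
      (prod_mono Ioc_subset_Ioi_self subset_rfl) hFzero,
    Measure.volume_eq_prod, setIntegral_prod F hFint, ← integral_smul]
  refine setIntegral_congr_fun measurableSet_Ioc fun ρ _ => ?_
  simp only [F, integral_smul, integral_Ioo_comp_circleMap_zero, smul_comm (2 * π)]

theorem integral_radial_smul_of_circleAverage_eq {E : Type*} [NormedAddCommGroup E]
    [NormedSpace ℝ E] [CompleteSpace E] {ψ : ℝ → ℝ} {f : ℂ → E} {ε : ℝ} {m : E}
    (hψ : ContinuousOn ψ (Icc 0 ε)) (hψε : ∀ s, ε < s → ψ s = 0)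
    (hf : ContinuousOn f (closedBall 0 ε)) (hm : ∀ ρ ∈ Ioc 0 ε, circleAverage f 0 ρ = m) :
    ∫ t, ψ ‖t‖ • f t = (∫ t : ℂ, ψ ‖t‖) • m := by
  have hψ_int := integral_radial_smul_eq_integral_circleAverage hψ hψε
    (continuousOn_const (c := (1 : ℝ)))
  simp only [smul_eq_mul, mul_one, circleAverage_const] at hψ_int
  rw [integral_radial_smul_eq_integral_circleAverage hψ hψε hf, hψ_int,
    mul_smul (2 * π) (∫ ρ in Ioc 0 ε, ρ * ψ ρ),
    ← integral_smul_const, setIntegral_congr_fun measurableSet_Ioc fun ρ hρ => by rw [hm ρ hρ]]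

theorem circleAverage_comp_sub {E : Type*} [NormedAddCommGroup E] [NormedSpace ℝ E] (f : ℂ → E)
    (c : ℂ) (R : ℝ) :
    circleAverage (fun t => f (c - t)) 0 R = circleAverage f c R := by
  calc circleAverage (fun t => f (c - t)) 0 R = circleAverage f c (-R) := by
        simp only [circleAverage_def, circleMap, zero_add, ofReal_neg, neg_mul, sub_eq_add_neg]
    _ = circleAverage f c R := circleAverage_neg_radius

theorem integral_radial_smul_comp_sub_of_circleAverage_eq {E : Type*} [NormedAddCommGroup E]
    [NormedSpace ℝ E] [CompleteSpace E] {ψ : ℝ → ℝ} {u : ℂ → E} {y : ℂ} {ε : ℝ} (hψ : ContinuousOn ψ (Icc 0 ε)) (hψε : ∀ s, ε < s → ψ s = 0)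
    (hu : ContinuousOn u (closedBall y ε)) (hmv : ∀ ρ ∈ Ioc 0 ε, circleAverage u y ρ = u y) :
    ∫ t, ψ ‖t‖ • u (y - t) = (∫ t : ℂ, ψ ‖t‖) • u y := by
  have hmaps : MapsTo (fun t => y - t) (closedBall 0 ε) (closedBall y ε) := fun t ht => by
    simpa [dist_eq_norm] using ht
  exact integral_radial_smul_of_circleAverage_eq hψ hψε (hu.comp (by fun_prop) hmaps)
    fun ρ hρ => by rw [circleAverage_comp_sub, hmv ρ hρ]

theorem hasCompactSupport_radial {ψ : ℝ → ℝ} {ε : ℝ} (hψ : ∀ s, ε < s → ψ s = 0) :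
    HasCompactSupport fun t : ℂ => ψ ‖t‖ :=
  HasCompactSupport.intro (isCompact_closedBall 0 ε) fun t ht => hψ ‖t‖ (by simpa using ht)

theorem exists_radial_bump {ε : ℝ} (hε : 0 < ε) :
    ∃ ψ : ℝ → ℝ, Continuous ψ ∧ (∀ s, ε < s → ψ s = 0) ∧
      ContDiff ℝ ∞ (fun t : ℂ => ψ ‖t‖) ∧ 0 < ∫ t : ℂ, ψ ‖t‖ := by
  -- A `ContDiffBump` on `ℂ` need not be radial; a bump on `ℝ` composed with `‖t‖ ^ 2` is.
  let B : ContDiffBump (0 : ℝ) := ⟨ε ^ 2 / 2, ε ^ 2, by positivity, by linarith [pow_pos hε 2]⟩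
  have hψ_zero : ∀ s, ε < s → B (s ^ 2) = 0 := fun s hs =>
    B.zero_of_le_dist (by rw [Real.dist_0_eq_abs, abs_sq]; nlinarith)
  have hφ : ContDiff ℝ ∞ (fun t : ℂ => B (‖t‖ ^ 2)) := B.contDiff.comp (contDiff_norm_sq ℝ)
  refine ⟨fun s => B (s ^ 2), B.continuous.comp (continuous_pow 2), hψ_zero, hφ, ?_⟩
  exact hφ.continuous.integral_pos_of_hasCompactSupport_nonneg_nonzero
    (hasCompactSupport_radial hψ_zero) (fun t => B.nonneg) (x := 0)
    (by simpa using (B.pos_of_mem_ball (mem_ball_self B.rOut_pos)).ne')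

theorem contDiffAt_of_circleAverage_eq {E : Type*} [NormedAddCommGroup E] [NormedSpace ℝ E]
    [CompleteSpace E] {U : Set ℂ} {u : ℂ → E} (hU : IsOpen U)
    (hu : ContinuousOn u U)
    (hmv : ∀ z ρ, 0 < ρ → closedBall z ρ ⊆ U → circleAverage u z ρ = u z)
    {z : ℂ} (hz : z ∈ U) {n : ℕ∞} : ContDiffAt ℝ n u z := by
  obtain ⟨δ, hδ, hδU⟩ := nhds_basis_closedBall.mem_iff.1 (hU.mem_nhds hz)
  set ε := δ / 2
  have hε : 0 < ε := half_pos hδ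
  have hεU : closedBall z (2 * ε) ⊆ U := by rwa [mul_div_cancel₀ δ two_ne_zero]
  obtain ⟨ψ, hψ, hψ_zero, hφ_smooth, hc⟩ := exists_radial_bump hε
  set φ : ℂ → ℝ := fun t => ψ ‖t‖
  have hφ_supp : HasCompactSupport φ := hasCompactSupport_radial hψ_zero
  set g := (closedBall z (2 * ε)).indicator u
  have hg : Integrable g :=
    ((hu.mono hεU).integrableOn_compact (isCompact_closedBall _ _)).integrable_indicator
      measurableSet_closedBall
  have hconv : ∀ y ∈ ball z ε, (φ ⋆[ContinuousLinearMap.lsmul ℝ ℝ] g) y = (∫ t, φ t) • u y := by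
    intro y hy
    have hsub : closedBall y ε ⊆ closedBall z (2 * ε) :=
      closedBall_subset_closedBall' (by linarith [mem_ball.1 hy])
    calc (φ ⋆[ContinuousLinearMap.lsmul ℝ ℝ] g) y = ∫ t, ψ ‖t‖ • u (y - t) := by
          refine integral_congr_ae (Filter.Eventually.of_forall fun t => ?_)
          by_cases ht : t ∈ closedBall 0 ε
          · have hyt : y - t ∈ closedBall z (2 * ε) := hsub (by simpa [dist_eq_norm] using ht)
            simp [φ, g, indicator_of_mem hyt]
          · simp [φ, hψ_zero ‖t‖ (by simpa using ht)]
      _ = (∫ t, φ t) • u y :=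
        integral_radial_smul_comp_sub_of_circleAverage_eq hψ.continuousOn hψ_zero
          (hu.mono (hsub.trans hεU)) fun ρ hρ =>
            hmv y ρ hρ.1 ((closedBall_subset_closedBall hρ.2).trans (hsub.trans hεU))
  have hsmooth := (hφ_supp.contDiff_convolution_left (ContinuousLinearMap.lsmul ℝ ℝ) hφ_smooth
    hg.locallyIntegrable).const_smul (∫ t, φ t)⁻¹
  refine (hsmooth.of_le (WithTop.coe_le_coe.2 le_top)).contDiffAt.congr_of_eventuallyEq ?_
  filter_upwards [ball_mem_nhds z hε] with y hy
  simp [hconv y hy, hc.ne']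

theorem norm_image_one_le_of_norm_deriv_deriv_le {E : Type*} [NormedAddCommGroup E]
    [NormedSpace ℝ E] {f f' f'' : ℝ → E} {C : ℝ}
    (hf : ∀ t ∈ Icc (0 : ℝ) 1, HasDerivAt f (f' t) t)
    (hf' : ∀ t ∈ Icc (0 : ℝ) 1, HasDerivAt f' (f'' t) t) (h₀ : f 0 = 0) (h₀' : f' 0 = 0)
    (hC : ∀ t ∈ Icc (0 : ℝ) 1, ‖f'' t‖ ≤ C) : ‖f 1‖ ≤ C := by
  have hC₀ : 0 ≤ C := (norm_nonneg _).trans (hC 0 (left_mem_Icc.2 zero_le_one))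
  have hf'_bound : ∀ t ∈ Icc (0 : ℝ) 1, ‖f' t‖ ≤ C := by
    intro t ht
    have := norm_image_sub_le_of_norm_deriv_le_segment' (fun s hs => (hf' s hs).hasDerivWithinAt)
      (fun s hs => hC s (Ico_subset_Icc_self hs)) t ht
    rw [h₀', sub_zero, sub_zero] at this
    nlinarith [ht.2]
  simpa [h₀] using norm_image_sub_le_of_norm_deriv_le_segment_01'
    (fun t ht => (hf t ht).hasDerivWithinAt) (fun t ht => hf'_bound t (Ico_subset_Icc_self ht))

theorem norm_sub_taylor_two_le {E F : Type*} [NormedAddCommGroup E] [NormedSpace ℝ E]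
    [NormedAddCommGroup F] [NormedSpace ℝ F] {V : E → F} {D1 : E → E →L[ℝ] F}
    {D2 : E → E →L[ℝ] E →L[ℝ] F} {w e : E} {η : ℝ}
    (hV : ∀ t ∈ Icc (0 : ℝ) 1, HasFDerivAt V (D1 (w + t • e)) (w + t • e))
    (hD1 : ∀ t ∈ Icc (0 : ℝ) 1, HasFDerivAt D1 (D2 (w + t • e)) (w + t • e))
    (hD2 : ∀ t ∈ Icc (0 : ℝ) 1, ‖D2 (w + t • e) - D2 w‖ ≤ η) :
    ‖V (w + e) - V w - D1 w e - (2 : ℝ)⁻¹ • D2 w e e‖ ≤ η * ‖e‖ ^ 2 := by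
  let f : ℝ → F := fun t => V (w + t • e) - V w - t • D1 w e - (t ^ 2 / 2) • D2 w e e
  let f' : ℝ → F := fun t => D1 (w + t • e) e - D1 w e - t • D2 w e e
  have hline : ∀ t : ℝ, HasDerivAt (fun s : ℝ => w + s • e) e t := fun t => by
    simpa using ((hasDerivAt_id t).smul_const e).const_add w
  have hf : ∀ t ∈ Icc (0 : ℝ) 1, HasDerivAt f (f' t) t := fun t ht => by
    have := ((((hV t ht).comp_hasDerivAt t (hline t)).sub_const (V w)).sub
      ((hasDerivAt_id t).smul_const (D1 w e))).sub
      (((hasDerivAt_pow 2 t).div_const 2).smul_const (D2 w e e))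
    exact this.congr_deriv (by simp only [f', one_smul]; congr 2; push_cast; ring)
  have hf' : ∀ t ∈ Icc (0 : ℝ) 1, HasDerivAt f' (D2 (w + t • e) e e - D2 w e e) t :=
    fun t ht => by
      have hD1e : HasDerivAt (fun s : ℝ => D1 (w + s • e) e) (D2 (w + t • e) e e) t :=
        (ContinuousLinearMap.apply ℝ F e).hasFDerivAt.comp_hasDerivAt t
          ((hD1 t ht).comp_hasDerivAt t (hline t))
      have := (hD1e.sub_const (D1 w e)).sub ((hasDerivAt_id t).smul_const (D2 w e e))
      exact this.congr_deriv (by simp)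
  have hf'' : ∀ t ∈ Icc (0 : ℝ) 1, ‖D2 (w + t • e) e e - D2 w e e‖ ≤ η * ‖e‖ ^ 2 := by
    intro t ht
    calc ‖D2 (w + t • e) e e - D2 w e e‖ = ‖(D2 (w + t • e) - D2 w) e e‖ := by
          rw [sub_apply, sub_apply]
      _ ≤ ‖D2 (w + t • e) - D2 w‖ * ‖e‖ * ‖e‖ := ContinuousLinearMap.le_opNorm₂ _ _ _
      _ ≤ η * ‖e‖ ^ 2 := by
          rw [mul_assoc, ← sq]
          exact mul_le_mul_of_nonneg_right (hD2 t ht) (by positivity)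
  have := norm_image_one_le_of_norm_deriv_deriv_le hf hf' (by simp [f]) (by simp [f']) hf''
  simpa [f] using this

theorem circleMap_zero_eq_smul_add_smul (ρ θ : ℝ) :
    circleMap 0 ρ θ = (ρ * Real.cos θ) • (1 : ℂ) + (ρ * Real.sin θ) • I := by
  rw [circleMap_zero, Complex.exp_mul_I]
  simp only [real_smul, ← ofReal_cos, ← ofReal_sin]
  push_cast
  ring

theorem circleAverage_quadratic (a : ℝ) (L : ℂ →L[ℝ] ℝ) (Q : ℂ →L[ℝ] ℂ →L[ℝ] ℝ) (ρ : ℝ) :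
    circleAverage (fun e => a + L e + Q e e / 2) 0 ρ = a + ρ ^ 2 * (Q 1 1 + Q I I) / 4 := by
  have hexpand : ∀ θ : ℝ, a + L (circleMap 0 ρ θ) + Q (circleMap 0 ρ θ) (circleMap 0 ρ θ) / 2 =
      a + ρ * L 1 * Real.cos θ + ρ * L I * Real.sin θ + ρ ^ 2 * Q 1 1 / 2 * Real.cos θ ^ 2 +
        ρ ^ 2 * (Q 1 I + Q I 1) / 2 * (Real.sin θ * Real.cos θ) +
          ρ ^ 2 * Q I I / 2 * Real.sin θ ^ 2 := by
    intro θ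
    simp only [circleMap_zero_eq_smul_add_smul, map_add, map_smul, add_apply, smul_apply,
      smul_eq_mul]
    ring
  simp only [circleAverage_def, hexpand, smul_eq_mul]
  rw [intervalIntegral.integral_add, intervalIntegral.integral_add, intervalIntegral.integral_add,
    intervalIntegral.integral_add, intervalIntegral.integral_add]
  · simp only [intervalIntegral.integral_const, intervalIntegral.integral_const_mul, integral_cos,
      integral_sin, integral_cos_sq, integral_sin_sq, integral_sin_mul_cos₁, Real.sin_two_pi,
      Real.sin_zero, Real.cos_two_pi, Real.cos_zero, smul_eq_mul]
    field_simp
    ring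
  all_goals exact Continuous.intervalIntegrable (by fun_prop) _ _

theorem laplacian_eq_fderiv_fderiv {V : ℂ → ℝ} {w : ℂ}
    (h : DifferentiableAt ℝ (fderiv ℝ V) w) :
    laplacian V w = fderiv ℝ (fderiv ℝ V) w 1 1 + fderiv ℝ (fderiv ℝ V) w I I := by
  have hdir : ∀ v, fderiv ℝ (fun y => fderiv ℝ V y v) w = (fderiv ℝ (fderiv ℝ V) w).flip v :=
    fun v => by simp [fderiv_clm_apply h (differentiableAt_const v)]
  simp only [laplacian, hdir, ContinuousLinearMap.flip_apply]

theorem abs_circleAverage_sub_taylor_le {V : ℂ → ℝ} {D1 : ℂ → ℂ →L[ℝ] ℝ}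
    {D2 : ℂ → ℂ →L[ℝ] ℂ →L[ℝ] ℝ} {w : ℂ} {δ η ρ : ℝ}
    (hV : ∀ y ∈ ball w δ, HasFDerivAt V (D1 y) y) (hD1 : ∀ y ∈ ball w δ, HasFDerivAt D1 (D2 y) y)
    (hD2 : ∀ y ∈ ball w δ, ‖D2 y - D2 w‖ ≤ η) (hρ : 0 ≤ ρ) (hρδ : ρ < δ) :
    |circleAverage V w ρ - (V w + ρ ^ 2 * (D2 w 1 1 + D2 w I I) / 4)| ≤ η * ρ ^ 2 := by
  have hseg : ∀ e ∈ sphere (0 : ℂ) ρ, ∀ t ∈ Icc (0 : ℝ) 1, w + t • e ∈ ball w δ := by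
    intro e he t ht
    rw [mem_ball, dist_eq_norm, add_sub_cancel_left, norm_smul, mem_sphere_zero_iff_norm.1 he,
      Real.norm_of_nonneg ht.1]
    nlinarith [ht.2]
  have htaylor : ∀ e ∈ sphere (0 : ℂ) ρ,
      |V (w + e) - (V w + D1 w e + D2 w e e / 2)| ≤ η * ρ ^ 2 := by
    intro e he
    have := norm_sub_taylor_two_le (fun t ht => hV _ (hseg e he t ht))
      (fun t ht => hD1 _ (hseg e he t ht)) (fun t ht => hD2 _ (hseg e he t ht))
    rw [mem_sphere_zero_iff_norm.1 he, Real.norm_eq_abs, smul_eq_mul] at this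
    convert this using 2
    ring
  have hcont : ContinuousOn (fun e => V (e + w)) (sphere 0 ρ) := fun e he =>
    ((hV _ (by simpa [add_comm] using hseg e he 1 ⟨zero_le_one, le_rfl⟩)).continuousAt.comp
      (continuousAt_id.add continuousAt_const)).continuousWithinAt
  have hquad : ContinuousOn (fun e => V w + D1 w e + D2 w e e / 2) (sphere 0 ρ) :=
    Continuous.continuousOn (by fun_prop)
  rw [← circleAverage_quadratic, ← circleAverage_map_add_const,
    ← circleAverage_fun_sub (hcont.circleIntegrable hρ) (hquad.circleIntegrable hρ)]
  refine abs_circleAverage_le_circleAverage_abs.trans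
    (circleAverage_mono_on_of_le_circle ((hcont.sub hquad).abs.circleIntegrable hρ)
      fun e he => ?_)
  simpa [add_comm] using htaylor e (by simpa [abs_of_nonneg hρ] using he)

theorem laplacian_eq_zero_of_circleAverage_eq {V : ℂ → ℝ} {w : ℂ} (hV : ContDiffAt ℝ 2 V w)
    (hmv : ∀ᶠ ρ in 𝓝[>] 0, circleAverage V w ρ = V w) : laplacian V w = 0 := by
  obtain ⟨U, hU, hVU⟩ := hV.contDiffOn le_rfl (by simp)
  obtain ⟨δ₀, hδ₀, hball⟩ := Metric.mem_nhds_iff.1 hU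
  have hVb : ContDiffOn ℝ 2 V (ball w δ₀) := hVU.mono hball
  have hD1b : ContDiffOn ℝ 1 (fderiv ℝ V) (ball w δ₀) :=
    hVb.fderiv_of_isOpen isOpen_ball (by norm_num)
  have hV' : ∀ y ∈ ball w δ₀, HasFDerivAt V (fderiv ℝ V y) y := fun y hy =>
    ((hVb.differentiableOn two_ne_zero y hy).differentiableAt
      (isOpen_ball.mem_nhds hy)).hasFDerivAt
  have hD1' : ∀ y ∈ ball w δ₀, HasFDerivAt (fderiv ℝ V) (fderiv ℝ (fderiv ℝ V) y) y :=
    fun y hy => ((hD1b.differentiableOn one_ne_zero y hy).differentiableAt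
      (isOpen_ball.mem_nhds hy)).hasFDerivAt
  have hD2 : ContinuousAt (fderiv ℝ (fderiv ℝ V)) w :=
    (hD1b.continuousOn_fderiv_of_isOpen isOpen_ball le_rfl).continuousAt (ball_mem_nhds w hδ₀)
  rw [laplacian_eq_fderiv_fderiv (hD1' w (mem_ball_self hδ₀)).differentiableAt]
  set D2 := fderiv ℝ (fderiv ℝ V)
  set X := D2 w 1 1 + D2 w I I
  suffices h : ∀ η > 0, |X| ≤ 4 * η by
    by_contra hX
    have hX' := abs_pos.2 hX
    linarith [h (|X| / 8) (by positivity)]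
  intro η hη
  obtain ⟨δ₁, hδ₁, hD2δ⟩ :=
    Metric.eventually_nhds_iff.1 (hD2.eventually (closedBall_mem_nhds (D2 w) hη))
  set δ := min δ₀ δ₁
  obtain ⟨ρ, hρmv, hρ⟩ := (hmv.and (Ioo_mem_nhdsGT (lt_min hδ₀ hδ₁))).exists
  have hball₀ : ball w δ ⊆ ball w δ₀ := ball_subset_ball (min_le_left _ _)
  have hbound := abs_circleAverage_sub_taylor_le (fun y hy => hV' y (hball₀ hy))
    (fun y hy => hD1' y (hball₀ hy))
    (fun y hy => dist_eq_norm (D2 y) (D2 w) ▸ hD2δ (hy.out.trans_le (min_le_right _ _)))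
    hρ.1.le hρ.2
  rw [hρmv, sub_add_cancel_left, abs_neg, abs_div, abs_mul, abs_of_pos (pow_pos hρ.1 2),
    abs_of_pos (four_pos : (0 : ℝ) < 4)] at hbound
  refine le_of_mul_le_mul_left ?_ (pow_pos hρ.1 2)
  linarith

theorem harmonic_of_mean_value_general (z₀ : ℂ) (r : ℝ) (u : ℂ → ℝ)
    (hcont : ContinuousOn u (ball z₀ r))
    (hmv : ∀ z : ℂ, ∀ ρ : ℝ, 0 < ρ → closedBall z ρ ⊆ ball z₀ r →
      u z = (1 / (2 * Real.pi)) * ∫ θ in (0:ℝ)..(2 * Real.pi),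
        u (z + ρ * Complex.exp (θ * Complex.I))) :
    HarmonicOnSet u (ball z₀ r) := by
  have hmean : ∀ z ρ, 0 < ρ → closedBall z ρ ⊆ ball z₀ r → circleAverage u z ρ = u z :=
    fun z ρ hρ hsub => by
      simp only [circleAverage_def, circleMap, smul_eq_mul, ← one_div]
      exact (hmv z ρ hρ hsub).symm
  have hsmooth : ∀ z ∈ ball z₀ r, ContDiffAt ℝ 2 u z := fun z hz =>
    contDiffAt_of_circleAverage_eq isOpen_ball hcont hmean hz (n := 2)
  refine ⟨fun z hz => (hsmooth z hz).contDiffWithinAt, fun z hz =>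
    laplacian_eq_zero_of_circleAverage_eq (hsmooth z hz) ?_⟩
  obtain ⟨δ, hδ, hsub⟩ := nhds_basis_closedBall.mem_iff.1 (isOpen_ball.mem_nhds hz)
  filter_upwards [Ioo_mem_nhdsGT hδ] with ρ hρ
  exact hmean z ρ hρ.1 ((closedBall_subset_closedBall hρ.2.le).trans hsub)

theorem harmonic_of_mean_value (z₀ : ℂ) (r : ℝ) (hr : 0 < r) (u : ℂ → ℝ)
    (hcont : ContinuousOn u (ball z₀ r))
    (hbdd : ∃ M : ℝ, ∀ z ∈ ball z₀ r, |u z| ≤ M)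
    (hmv : ∀ z : ℂ, ∀ ρ : ℝ, 0 < ρ → closedBall z ρ ⊆ ball z₀ r →
      u z = (1 / (2 * Real.pi)) * ∫ θ in (0:ℝ)..(2 * Real.pi),
        u (z + ρ * Complex.exp (θ * Complex.I))) :
    HarmonicOnSet u (ball z₀ r) :=
  harmonic_of_mean_value_general z₀ r u hcont hmv
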